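/- For every δ > 0 and every constant C > 0 there exists n_0 such that for every n ≥ n_0 there exists an n-vertex undirected graph G with nonnegative edge weights with the following property: every (β,0)-hopset H for G (i.e., an exact hopset: dist^{(β)}_{G∪H}(u,v) = dist_G(u,v) for all u,v) with |H| ≤ C·n satisfies β ≥ n^{1/3−δ}. -/

import Mathlib

open scoped ENNReal

namespace Hopsets

/-- A weighted directed graph on vertex type `V`: a finite edge set together
with a weight function. -/
structure WDigraph (V : Type) where
  edges : Finset (V × V)
  w : V × V → ℝ

variable {V : Type}

/-- All edge weights are nonnegative. -/
def WDigraph.Nonneg (G : WDigraph V) : Prop := ∀ e, 0 ≤ G.w e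

/-- Edge weights are polynomially bounded (degree `q`) in the number of vertices. -/
def WDigraph.PolyBounded [Fintype V] (G : WDigraph V) (q : ℕ) : Prop :=
  ∀ e ∈ G.edges, G.w e ≤ (Fintype.card V : ℝ) ^ q

/-- `G` encodes an undirected graph: edges come in symmetric pairs of equal weight. -/
def WDigraph.Symmetric (G : WDigraph V) : Prop :=
  ∀ e ∈ G.edges, (e.2, e.1) ∈ G.edges ∧ G.w (e.2, e.1) = G.w e

/-- `G` is unweighted: every edge has weight `1`. -/
def WDigraph.Unweighted (G : WDigraph V) : Prop := ∀ e, G.w e = 1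

/-- `IsWalkFrom G u v l` : the list of edges `l` forms a walk from `u` to `v` in `G`. -/
def IsWalkFrom (G : WDigraph V) : V → V → List (V × V) → Prop
  | u, v, [] => u = v
  | u, v, e :: l => e ∈ G.edges ∧ e.1 = u ∧ IsWalkFrom G e.2 v l

/-- The total weight of a walk, as an extended nonnegative real. -/
noncomputable def walkWeight (G : WDigraph V) (l : List (V × V)) : ℝ≥0∞ :=
  ENNReal.ofReal ((l.map G.w).sum)

/-- `β`-hop-bounded distance: the infimum weight of a `u`-`v` walk with at most `β` edges. -/
noncomputable def WDigraph.hopDist (G : WDigraph V) (β : ℕ) (u v : V) : ℝ≥0∞ :=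
  ⨅ l ∈ {l : List (V × V) | IsWalkFrom G u v l ∧ l.length ≤ β}, walkWeight G l

/-- Distance: infimum weight of a `u`-`v` walk (`∞` if there is none). -/
noncomputable def WDigraph.dist (G : WDigraph V) (u v : V) : ℝ≥0∞ :=
  ⨅ l ∈ {l : List (V × V) | IsWalkFrom G u v l}, walkWeight G l

/-- `v` is reachable from `u` in `G`. -/
def WDigraph.Reachable (G : WDigraph V) (u v : V) : Prop :=
  ∃ l, IsWalkFrom G u v l

/-- The graph `G ∪ H` obtained by adding the edge set `H`, each added edge `(x,y)`
weighted by `dist_G(x,y)`. -/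
noncomputable def WDigraph.augment [DecidableEq V] (G : WDigraph V) (H : Finset (V × V)) :
    WDigraph V where
  edges := G.edges ∪ H
  w := fun e => if e ∈ H then (G.dist e.1 e.2).toReal else G.w e

/-- `H` is a `(β,ε)`-hopset for `G`:
`dist_G(u,v) ≤ dist^{(β)}_{G∪H}(u,v) ≤ (1+ε)·dist_G(u,v)` for all `u, v`. -/
def IsHopset [DecidableEq V] (G : WDigraph V) (β : ℕ) (ε : ℝ) (H : Finset (V × V)) : Prop :=
  ∀ u v, G.dist u v ≤ (G.augment H).hopDist β u v ∧
    (G.augment H).hopDist β u v ≤ ENNReal.ofReal (1 + ε) * G.dist u v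

/-- The subgraph of `G` with edge set `E'` (same weights). -/
def WDigraph.sub (G : WDigraph V) (E' : Finset (V × V)) : WDigraph V :=
  ⟨E', G.w⟩

/-- `E'` (a subgraph of `G`) is an `r`-missing `t`-spanner: for every reachable pair
`(u,v)` there is a `u`-`v` walk in `G` of weight at most `t·dist_G(u,v)` with at most
`r` edges outside `E'`. -/
def IsMissingSpanner [DecidableEq V] (G : WDigraph V) (E' : Finset (V × V))
    (r : ℕ) (t : ℝ) : Prop :=
  ∀ u v, G.Reachable u v → ∃ l, IsWalkFrom G u v l ∧
    walkWeight G l ≤ ENNReal.ofReal t * G.dist u v ∧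
    (l.filter (fun e => decide (e ∉ E'))).length ≤ r

end Hopsets

/-!
Put vertex `v` in layer `v / m` and column `v % m`, and join any two vertices of consecutive
layers by an edge of weight `W + (column jump)²`. If `W > h d²`, a shortest path between the
ends `x = (0, a)` and `y = (h, a + h d)` of the line `k ↦ (k, a + k d)` has exactly `h` hops, and by
Cauchy–Schwarz the only way to cover the horizontal distance `h d` in `h` hops at cost `h d²`
is to follow the line: every `z` with `dist x z + dist z y ≤ dist x y` lies on it. Hence an
exact walk with fewer than `h` hops uses a hopset edge joining two vertices of the line at
least two layers apart, and such an edge determines the line. With `h + 1` layers of width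
`m ≈ n / h` there are about `m² / h ≈ n² / h³` such lines, so `|H| ≤ C n` forces `β ≥ h` as long
as `h³ ≪ n / C`, which holds for `h = ⌈n^{1/3 - δ}⌉`.
-/

open Filter Topology

theorem List.sq_sum_map_le_length_mul {α R : Type*} [CommRing R] [LinearOrder R]
    [IsStrictOrderedRing R] (l : List α) (g : α → R) :
    (l.map g).sum ^ 2 ≤ l.length * (l.map fun x => g x ^ 2).sum := by
  have := sq_sum_le_card_mul_sum_sq (s := Finset.univ) (f := fun i : Fin l.length => g l[i.1])
  rwa [Fin.sum_univ_fun_getElem, Finset.card_univ, Fintype.card_fin,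
    Fin.sum_univ_fun_getElem l fun x => g x ^ 2] at this

namespace Hopsets

section Walks

variable {V : Type} {G : WDigraph V} {u v : V} {e : V × V} {l l₁ l₂ : List (V × V)} {β : ℕ}

theorem isWalkFrom_append_iff :
    IsWalkFrom G u v (l₁ ++ l₂) ↔ ∃ z, IsWalkFrom G u z l₁ ∧ IsWalkFrom G z v l₂ := by
  induction l₁ generalizing u with
  | nil => simp [IsWalkFrom]
  | cons e t ih => simp [IsWalkFrom, ih, and_assoc]

theorem IsWalkFrom.mem_edges (hl : IsWalkFrom G u v l) (he : e ∈ l) : e ∈ G.edges := by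
  induction l generalizing u with
  | nil => simp at he
  | cons f t ih =>
    obtain ⟨hf, -, ht⟩ := hl
    rcases List.mem_cons.mp he with rfl | he
    exacts [hf, ih ht he]

theorem IsWalkFrom.sum_map_sub {M : Type*} [AddCommGroup M] (hl : IsWalkFrom G u v l)
    (f : V → M) : (l.map fun e => f e.2 - f e.1).sum = f v - f u := by
  induction l generalizing u with
  | nil => simp [show u = v from hl]
  | cons e t ih =>
    obtain ⟨-, rfl, ht⟩ := hl
    simp [ih ht]

theorem IsWalkFrom.sub_le_length (hl : IsWalkFrom G u v l) {f : V → ℤ}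
    (hf : ∀ e ∈ l, f e.2 - f e.1 ≤ 1) : f v - f u ≤ l.length := by
  rw [← hl.sum_map_sub f]
  simpa using List.sum_le_card_nsmul (l.map fun e => f e.2 - f e.1) 1 fun x hx => by
    obtain ⟨e, he, rfl⟩ := List.mem_map.mp hx
    exact hf e he

theorem walkWeight_append (hG : G.Nonneg) (l₁ l₂ : List (V × V)) :
    walkWeight G (l₁ ++ l₂) = walkWeight G l₁ + walkWeight G l₂ := by
  have hnn (l : List (V × V)) : 0 ≤ (l.map G.w).sum :=
    List.sum_nonneg fun x hx => by
      obtain ⟨e, -, rfl⟩ := List.mem_map.mp hx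
      exact hG e
  simp only [walkWeight, List.map_append, List.sum_append, ENNReal.ofReal_add (hnn l₁) (hnn l₂)]

theorem WDigraph.dist_le_walkWeight (hl : IsWalkFrom G u v l) : G.dist u v ≤ walkWeight G l :=
  iInf₂_le l hl

theorem WDigraph.hopDist_le_walkWeight (hl : IsWalkFrom G u v l) (hβ : l.length ≤ β) :
    G.hopDist β u v ≤ walkWeight G l :=
  iInf₂_le l ⟨hl, hβ⟩

theorem WDigraph.dist_self (G : WDigraph V) (u : V) : G.dist u u = 0 :=
  nonpos_iff_eq_zero.mp ((G.dist_le_walkWeight (l := []) rfl).trans_eq (by simp [walkWeight]))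

theorem WDigraph.dist_triangle (hG : G.Nonneg) (u w v : V) :
    G.dist u v ≤ G.dist u w + G.dist w v := by
  simp only [WDigraph.dist, ENNReal.iInf_add, ENNReal.add_iInf]
  refine le_iInf₂ fun l₂ h₂ => le_iInf₂ fun l₁ h₁ => ?_
  rw [← walkWeight_append hG]
  exact G.dist_le_walkWeight (isWalkFrom_append_iff.mpr ⟨w, h₁, h₂⟩)

theorem WDigraph.exists_walk_hopDist_eq [Finite V] (h : G.hopDist β u v ≠ ⊤) :
    ∃ l, IsWalkFrom G u v l ∧ l.length ≤ β ∧ walkWeight G l = G.hopDist β u v := by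
  set S := {l : List (V × V) | IsWalkFrom G u v l ∧ l.length ≤ β}
  have hS : S.Finite := (List.finite_length_le (V × V) β).subset fun l hl => hl.2
  have hne : S.Nonempty := by
    by_contra hempty
    exact h (iInf₂_eq_top.mpr fun l hl => (hempty ⟨l, hl⟩).elim)
  obtain ⟨l, hl, hmin⟩ := S.exists_min_image (walkWeight G) hS hne
  exact ⟨l, hl.1, hl.2, le_antisymm (le_iInf₂ hmin) (iInf₂_le l hl)⟩

theorem WDigraph.exists_walk_dist_eq (hG : ∀ e, ∃ k : ℕ, G.w e = k) (h : G.dist u v ≠ ⊤) :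
    ∃ l, IsWalkFrom G u v l ∧ walkWeight G l = G.dist u v := by
  choose f hf using hG
  have hnat (l : List (V × V)) : walkWeight G l = ((l.map f).sum : ℕ) := by
    have hw : G.w = fun e => (f e : ℝ) := funext hf
    rw [walkWeight, hw, ← ENNReal.ofReal_natCast, Nat.cast_list_sum, List.map_map]
    rfl
  set T := {k : ℕ | ∃ l, IsWalkFrom G u v l ∧ (l.map f).sum = k}
  have hne : T.Nonempty := by
    by_contra hempty
    exact h (iInf₂_eq_top.mpr fun l hl => (hempty ⟨_, l, hl, rfl⟩).elim)
  obtain ⟨l, hl, hk⟩ := Nat.sInf_mem hne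
  refine ⟨l, hl, le_antisymm (le_iInf₂ fun l' hl' => ?_) (G.dist_le_walkWeight hl)⟩
  rw [hnat, hnat, hk]
  exact_mod_cast Nat.sInf_le (s := T) ⟨l', hl', rfl⟩

end Walks

section Augment

variable {V : Type} [DecidableEq V] {G : WDigraph V} {H : Finset (V × V)} {u v z : V}
  {e : V × V} {l l₁ l₂ : List (V × V)} {β : ℕ}

theorem WDigraph.augment_nonneg (hG : G.Nonneg) : (G.augment H).Nonneg := fun e => by
  simp only [WDigraph.augment]
  split_ifs
  exacts [ENNReal.toReal_nonneg, hG e]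

theorem WDigraph.dist_le_augment_w (hH : ∀ e ∈ H, G.dist e.1 e.2 ≠ ⊤)
    (he : e ∈ (G.augment H).edges) : G.dist e.1 e.2 ≤ ENNReal.ofReal ((G.augment H).w e) := by
  by_cases heH : e ∈ H
  · simp [WDigraph.augment, heH, ENNReal.ofReal_toReal (hH e heH)]
  · have heG : e ∈ G.edges := by simpa [WDigraph.augment, heH] using he
    simpa [WDigraph.augment, heH, walkWeight] using G.dist_le_walkWeight (l := [e]) ⟨heG, rfl, rfl⟩

theorem WDigraph.dist_le_walkWeight_augment (hG : G.Nonneg) (hH : ∀ e ∈ H, G.dist e.1 e.2 ≠ ⊤)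
    (hl : IsWalkFrom (G.augment H) u v l) : G.dist u v ≤ walkWeight (G.augment H) l := by
  induction l generalizing u with
  | nil => simp [show u = v from hl, G.dist_self]
  | cons e t ih =>
    obtain ⟨he, rfl, ht⟩ := hl
    rw [← List.singleton_append, walkWeight_append (WDigraph.augment_nonneg hG)]
    refine (G.dist_triangle hG _ e.2 _).trans (add_le_add ?_ (ih ht))
    simpa [walkWeight] using G.dist_le_augment_w hH he

theorem WDigraph.dist_add_dist_le_walkWeight_append (hG : G.Nonneg)
    (hH : ∀ e ∈ H, G.dist e.1 e.2 ≠ ⊤) (h₁ : IsWalkFrom (G.augment H) u z l₁)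
    (h₂ : IsWalkFrom (G.augment H) z v l₂) :
    G.dist u z + G.dist z v ≤ walkWeight (G.augment H) (l₁ ++ l₂) := by
  rw [walkWeight_append (WDigraph.augment_nonneg hG)]
  exact add_le_add (G.dist_le_walkWeight_augment hG hH h₁) (G.dist_le_walkWeight_augment hG hH h₂)

theorem WDigraph.dist_add_dist_le_of_mem (hG : G.Nonneg) (hH : ∀ e ∈ H, G.dist e.1 e.2 ≠ ⊤)
    (hl : IsWalkFrom (G.augment H) u v l) (he : e ∈ l) :
    G.dist u e.1 + G.dist e.1 v ≤ walkWeight (G.augment H) l ∧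
      G.dist u e.2 + G.dist e.2 v ≤ walkWeight (G.augment H) l := by
  obtain ⟨s, t, rfl⟩ := List.append_of_mem he
  obtain ⟨z, hs, he', rfl, ht⟩ := isWalkFrom_append_iff.mp hl
  refine ⟨G.dist_add_dist_le_walkWeight_append hG hH hs ⟨he', rfl, ht⟩, ?_⟩
  rw [List.append_cons]
  exact G.dist_add_dist_le_walkWeight_append hG hH
    (isWalkFrom_append_iff.mpr ⟨e.1, hs, he', rfl, rfl⟩) ht

theorem dist_ne_top_of_hopDist_eq (hexact : ∀ u v, (G.augment H).hopDist β u v = G.dist u v)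
    (hβ : 1 ≤ β) (he : e ∈ H) : G.dist e.1 e.2 ≠ ⊤ := by
  intro htop
  have := (G.augment H).hopDist_le_walkWeight (l := [e])
    ⟨Finset.mem_union_right _ he, rfl, rfl⟩ hβ
  rw [hexact, htop] at this
  simp [walkWeight, WDigraph.augment, he, htop] at this

end Augment

/-- The arithmetic core: `z` in layer `κ`, column `q` is reached from `(0, a)` and reaches
`(h, a + h d)` by walks with `L₁`, `L₂` hops whose squared column jumps sum to `S₁`, `S₂`. -/
theorem eq_add_mul_of_sq_le {W h d a q κ L₁ L₂ S₁ S₂ : ℕ} (hW : h * d ^ 2 < W)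
    (hL₁ : κ ≤ L₁) (hL₂ : h ≤ κ + L₂) (hsum : L₁ * W + S₁ + (L₂ * W + S₂) ≤ h * (W + d ^ 2))
    (h₁ : ((q : ℤ) - a) ^ 2 ≤ L₁ * S₁) (h₂ : ((a : ℤ) + h * d - q) ^ 2 ≤ L₂ * S₂) :
    q = a + κ * d := by
  -- a hop beyond the `h` needed costs `W > h d²`
  have hL : L₁ + L₂ ≤ h := by
    by_contra! hL
    nlinarith
  obtain rfl : L₁ = κ := by omega
  obtain rfl : h = L₁ + L₂ := by omega
  have hS : S₁ + S₂ ≤ (L₁ + L₂) * d ^ 2 := by nlinarith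
  zify at hS ⊢
  push_cast at h₂
  rcases Nat.eq_zero_or_pos (L₁ + L₂) with h0 | hpos
  · obtain rfl : L₁ = 0 := by omega
    simp only [Nat.cast_zero, zero_mul, add_zero] at h₁ ⊢
    linarith [pow_eq_zero_iff two_ne_zero |>.mp (le_antisymm h₁ (sq_nonneg _))]
  · -- `(L₁ + L₂) (q - a - L₁ d)² = L₂ (q - a)² + L₁ (a + (L₁ + L₂) d - q)² - L₁ L₂ (L₁ + L₂) d²`
    have key : ((L₁ : ℤ) + L₂) * ((q : ℤ) - a - L₁ * d) ^ 2 ≤ 0 := by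
      have t₁ := mul_le_mul_of_nonneg_left h₁ (Nat.cast_nonneg (α := ℤ) L₂)
      have t₂ := mul_le_mul_of_nonneg_left h₂ (Nat.cast_nonneg (α := ℤ) L₁)
      have t₃ := mul_le_mul_of_nonneg_left hS (Nat.cast_nonneg (α := ℤ) (L₁ * L₂))
      push_cast at t₃
      linear_combination t₁ + t₂ + t₃
    have hsq : ((q : ℤ) - a - L₁ * d) ^ 2 = 0 :=
      le_antisymm (nonpos_of_mul_nonpos_right key (by exact_mod_cast hpos)) (sq_nonneg _)
    linarith [pow_eq_zero_iff two_ne_zero |>.mp hsq]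

theorem eq_and_eq_of_add_mul_eq {k₁ k₂ a d a' d' : ℕ} (hk : k₁ < k₂)
    (h₁ : a + k₁ * d = a' + k₁ * d') (h₂ : a + k₂ * d = a' + k₂ * d') : a = a' ∧ d = d' := by
  have hd : d = d' := by
    have h₁' : (a : ℤ) + k₁ * d = a' + k₁ * d' := by exact_mod_cast h₁
    have h₂' : (a : ℤ) + k₂ * d = a' + k₂ * d' := by exact_mod_cast h₂
    have : ((k₂ : ℤ) - k₁) * (d - d') = 0 := by linear_combination h₂' - h₁'
    rcases mul_eq_zero.mp this with h | h <;> omega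
  subst hd
  omega

section LayerGraph

variable {n m W : ℕ} {u v : Fin n} {e : Fin n × Fin n} {l : List (Fin n × Fin n)}

def layer (m : ℕ) (v : Fin n) : ℕ := v / m

def col (m : ℕ) (v : Fin n) : ℕ := v % m

def jumpSq (m : ℕ) (e : Fin n × Fin n) : ℕ := ((col m e.2 : ℤ) - col m e.1).natAbs ^ 2

def layerGraph (n m W : ℕ) : WDigraph (Fin n) where
  edges := {e | layer m e.1 + 1 = layer m e.2 ∨ layer m e.2 + 1 = layer m e.1}
  w e := (W + jumpSq m e : ℕ)

theorem layerGraph_nonneg : (layerGraph n m W).Nonneg := fun _ => Nat.cast_nonneg _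

theorem layerGraph_symmetric : (layerGraph n m W).Symmetric := by
  intro e he
  simp only [layerGraph, Finset.mem_filter, Finset.mem_univ, true_and] at he ⊢
  refine ⟨he.symm, ?_⟩
  show ((W + jumpSq m (e.2, e.1) : ℕ) : ℝ) = (W + jumpSq m e : ℕ)
  rw [jumpSq, jumpSq, ← Int.natAbs_neg, neg_sub]

theorem layer_sub_le_one_of_mem_edges (he : e ∈ (layerGraph n m W).edges) :
    (layer m e.2 : ℤ) - layer m e.1 ≤ 1 := by
  simp only [layerGraph, Finset.mem_filter, Finset.mem_univ, true_and] at he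
  omega

theorem walkWeight_layerGraph (l : List (Fin n × Fin n)) :
    walkWeight (layerGraph n m W) l = ((l.length * W + (l.map (jumpSq m)).sum : ℕ) : ℝ≥0∞) := by
  rw [walkWeight, ← ENNReal.ofReal_natCast]
  congr 1
  induction l with
  | nil => simp
  | cons e t ih =>
    simp only [List.map_cons, List.sum_cons, ih, List.length_cons]
    simp only [layerGraph]
    push_cast
    ring

theorem IsWalkFrom.layer_sub_le_length (hl : IsWalkFrom (layerGraph n m W) u v l) :
    (layer m v : ℤ) - layer m u ≤ l.length :=
  hl.sub_le_length (f := fun x => (layer m x : ℤ)) fun _ he =>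
    layer_sub_le_one_of_mem_edges (hl.mem_edges he)

theorem IsWalkFrom.sq_col_sub_le (hl : IsWalkFrom (layerGraph n m W) u v l) :
    ((col m v : ℤ) - col m u) ^ 2 ≤ l.length * ((l.map (jumpSq m)).sum : ℕ) := by
  rw [← hl.sum_map_sub fun x => (col m x : ℤ)]
  have hsq : (((l.map (jumpSq m)).sum : ℕ) : ℤ) =
      (l.map fun e => ((col m e.2 : ℤ) - col m e.1) ^ 2).sum := by
    simp [jumpSq, Nat.cast_list_sum, Function.comp_def]
  rw [hsq]
  exact List.sq_sum_map_le_length_mul _ _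

def OnLine (m a d : ℕ) (v : Fin n) : Prop := col m v = a + layer m v * d

def IsShortcut (m a d : ℕ) (e : Fin n × Fin n) : Prop :=
  layer m e.1 + 2 ≤ layer m e.2 ∧ OnLine m a d e.1 ∧ OnLine m a d e.2

theorem IsShortcut.unique {a d a' d' : ℕ} (h : IsShortcut m a d e) (h' : IsShortcut m a' d' e) :
    a = a' ∧ d = d' :=
  eq_and_eq_of_add_mul_eq (by linarith [h.1]) (h.2.1.symm.trans h'.2.1) (h.2.2.symm.trans h'.2.2)

theorem onLine_of_dist_add_dist_le {x y z : Fin n} {h a d : ℕ} (hW : h * d ^ 2 < W)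
    (hx : layer m x = 0) (hxc : col m x = a) (hy : layer m y = h) (hyc : col m y = a + h * d)
    (hz : (layerGraph n m W).dist x z + (layerGraph n m W).dist z y ≤
      ((h * (W + d ^ 2) : ℕ) : ℝ≥0∞)) :
    OnLine m a d z := by
  have hfin := ne_top_of_le_ne_top (ENNReal.natCast_ne_top _) hz
  obtain ⟨l₁, hl₁, hw₁⟩ :=
    (layerGraph n m W).exists_walk_dist_eq (fun _ => ⟨_, rfl⟩) (ENNReal.add_ne_top.mp hfin).1
  obtain ⟨l₂, hl₂, hw₂⟩ :=
    (layerGraph n m W).exists_walk_dist_eq (fun _ => ⟨_, rfl⟩) (ENNReal.add_ne_top.mp hfin).2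
  rw [← hw₁, ← hw₂, walkWeight_layerGraph, walkWeight_layerGraph, ← Nat.cast_add,
    Nat.cast_le] at hz
  have hL₁ := hl₁.layer_sub_le_length
  have hL₂ := hl₂.layer_sub_le_length
  have hCS₁ := hl₁.sq_col_sub_le
  have hCS₂ := hl₂.sq_col_sub_le
  rw [hx] at hL₁
  rw [hy] at hL₂
  rw [hxc] at hCS₁
  rw [hyc, Nat.cast_add, Nat.cast_mul] at hCS₂
  exact eq_add_mul_of_sq_le hW (by omega) (by omega) hz hCS₁ hCS₂

end LayerGraph

section Lines

variable {n m W : ℕ} [NeZero n] {k p : ℕ} {H : Finset (Fin n × Fin n)} {β h : ℕ}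

def gridPt (m k p : ℕ) : Fin n := Fin.ofNat n (k * m + p)

theorem layer_gridPt (hp : p < m) (hn : k * m + p < n) : layer m (gridPt (n := n) m k p) = k := by
  rw [layer, gridPt, Fin.val_ofNat, Nat.mod_eq_of_lt hn, mul_comm, Nat.mul_add_div (by omega),
    Nat.div_eq_of_lt hp, add_zero]

theorem col_gridPt (hp : p < m) (hn : k * m + p < n) : col m (gridPt (n := n) m k p) = p := by
  rw [col, gridPt, Fin.val_ofNat, Nat.mod_eq_of_lt hn, Nat.mul_add_mod_self_right,
    Nat.mod_eq_of_lt hp]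

theorem dist_gridPt_le {a d : ℕ} : ∀ j, a + j * d < m → j * m + (a + j * d) < n →
    (layerGraph n m W).dist (gridPt m 0 a) (gridPt m j (a + j * d)) ≤
      ((j * (W + d ^ 2) : ℕ) : ℝ≥0∞)
  | 0, _, _ => by simp [WDigraph.dist_self]
  | j + 1, hp, hn => by
    have hp' : a + j * d < m := by nlinarith
    have hn' : j * m + (a + j * d) < n := by nlinarith
    have hstep : (layerGraph n m W).dist (gridPt m j (a + j * d))
        (gridPt m (j + 1) (a + (j + 1) * d)) ≤ ((W + d ^ 2 : ℕ) : ℝ≥0∞) := by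
      refine ((layerGraph n m W).dist_le_walkWeight (l := [(gridPt m j (a + j * d),
        gridPt m (j + 1) (a + (j + 1) * d))]) ⟨?_, rfl, rfl⟩).trans_eq ?_
      · simp only [layerGraph, Finset.mem_filter, Finset.mem_univ, true_and,
          layer_gridPt hp' hn', layer_gridPt hp hn, true_or]
      · have hjump : ((a + (j + 1) * d : ℕ) : ℤ) - (a + j * d : ℕ) = d := by push_cast; ring
        simp only [walkWeight_layerGraph, List.length_singleton, List.map_cons, List.map_nil,
          List.sum_singleton, jumpSq, col_gridPt hp' hn', col_gridPt hp hn, hjump,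
          Int.natAbs_natCast, one_mul]
    calc _ ≤ _ := (layerGraph n m W).dist_triangle layerGraph_nonneg _ (gridPt m j (a + j * d)) _
      _ ≤ ((j * (W + d ^ 2) : ℕ) : ℝ≥0∞) + ((W + d ^ 2 : ℕ) : ℝ≥0∞) :=
          add_le_add (dist_gridPt_le j hp' hn') hstep
      _ = (((j + 1) * (W + d ^ 2) : ℕ) : ℝ≥0∞) := by push_cast; ring

theorem exists_isShortcut_mem_of_hopDist_eq
    (hexact : ∀ u v, ((layerGraph n m W).augment H).hopDist β u v = (layerGraph n m W).dist u v)
    (hβ : β < h) (hn : (h + 1) * m ≤ n) {a d : ℕ} (hline : a + h * d < m) (hW : h * d ^ 2 < W) :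
    ∃ e ∈ H, IsShortcut m a d e := by
  set G := layerGraph n m W
  set x : Fin n := gridPt m 0 a
  set y : Fin n := gridPt m h (a + h * d)
  have htop : h * m + (a + h * d) < n := by nlinarith
  have hx₁ : layer m x = 0 := layer_gridPt (by omega) (by nlinarith)
  have hy₁ : layer m y = h := layer_gridPt hline htop
  have hdist : G.dist x y ≤ ((h * (W + d ^ 2) : ℕ) : ℝ≥0∞) := dist_gridPt_le h hline htop
  obtain ⟨l, hl, hlen, hwl⟩ := (G.augment H).exists_walk_hopDist_eq
    (by rw [hexact]; exact ne_top_of_le_ne_top (ENNReal.natCast_ne_top _) hdist)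
  rw [hexact] at hwl
  obtain ⟨e, he, hskip⟩ : ∃ e ∈ l, layer m e.1 + 2 ≤ layer m e.2 := by
    by_contra! hall
    have := hl.sub_le_length (f := fun v => (layer m v : ℤ)) fun e he => by
      have := hall e he
      omega
    simp only [hx₁, hy₁] at this
    omega
  have hH : ∀ e ∈ H, G.dist e.1 e.2 ≠ ⊤ := fun e' he' =>
    dist_ne_top_of_hopDist_eq hexact ((List.length_pos_of_mem he).trans_le hlen) he'
  have heH : e ∈ H := by
    rcases Finset.mem_union.mp (hl.mem_edges he) with heG | heH
    · have := layer_sub_le_one_of_mem_edges heG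
      omega
    · exact heH
  have honline (z : Fin n) (hz : G.dist x z + G.dist z y ≤ walkWeight (G.augment H) l) :
      OnLine m a d z :=
    onLine_of_dist_add_dist_le hW hx₁ (col_gridPt (by omega) (by nlinarith)) hy₁
      (col_gridPt hline htop) (hz.trans (hwl.trans_le hdist))
  obtain ⟨h₁, h₂⟩ := G.dist_add_dist_le_of_mem layerGraph_nonneg hH hl he
  exact ⟨e, heH, hskip, honline _ h₁, honline _ h₂⟩

theorem mul_le_card_of_hopDist_eq
    (hexact : ∀ u v, ((layerGraph n m W).augment H).hopDist β u v = (layerGraph n m W).dist u v)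
    (hβ : β < h) (hn : (h + 1) * m ≤ n) {A D : ℕ}
    (hAD : ∀ a < A, ∀ d < D, a + h * d < m ∧ h * d ^ 2 < W) : A * D ≤ H.card := by
  have key := Finset.card_le_card_of_forall_subsingleton (s := Finset.range A ×ˢ Finset.range D)
    (t := H) (fun p e => IsShortcut m p.1 p.2 e) ?_ ?_
  · simpa using key
  · rintro ⟨a, d⟩ hp
    simp only [Finset.mem_product, Finset.mem_range] at hp
    obtain ⟨hline, hW⟩ := hAD a hp.1 d hp.2
    exact exists_isShortcut_mem_of_hopDist_eq hexact hβ hn hline hW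
  · rintro e - ⟨a, d⟩ ⟨-, he⟩ ⟨a', d'⟩ ⟨-, he'⟩
    obtain ⟨rfl, rfl⟩ := he.unique he'
    rfl

end Lines

theorem mul_lt_mul_sq_div {C : ℝ} {h n : ℕ} (hC : 0 < C) (hh : 1 ≤ h)
    (hn : (8 * C + 4) * ((h : ℝ) + 1) ^ 3 ≤ n) :
    C * n < h * ((n / (2 * h * (h + 1)) : ℕ) : ℝ) ^ 2 := by
  set D := n / (2 * h * (h + 1))
  have hND : (n : ℝ) < 2 * h * (h + 1) * (D + 1) := by
    exact_mod_cast Nat.lt_mul_div_succ n (by positivity : 0 < 2 * h * (h + 1))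
  have hcube : 2 * h * (h + 1) * (4 * C * (h + 1) + 2) ≤ (8 * C + 4) * ((h : ℝ) + 1) ^ 3 := by
    rw [← sub_nonneg, show (8 * C + 4) * ((h : ℝ) + 1) ^ 3 - 2 * h * (h + 1) * (4 * C * (h + 1) + 2)
      = 8 * C * (h + 1) ^ 2 + 4 * (h + 1) * (h ^ 2 + h + 1) by ring]
    positivity
  have hD : 4 * C * (h + 1) + 2 < (D : ℝ) + 1 :=
    lt_of_mul_lt_mul_left ((hcube.trans hn).trans_lt hND) (by positivity)
  calc C * n < C * (2 * h * (h + 1) * (D + 1)) := mul_lt_mul_of_pos_left hND hC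
    _ ≤ h * (4 * C * (h + 1) * D) := by
        have hD1 : (0 : ℝ) ≤ D - 1 := by
          have : 0 ≤ 4 * C * ((h : ℝ) + 1) := by positivity
          linarith
        nlinarith [mul_nonneg (by positivity : (0 : ℝ) ≤ 2 * C * h * (h + 1)) hD1]
    _ < h * (D : ℝ) ^ 2 := by
        refine mul_lt_mul_of_pos_left ?_ (by positivity)
        nlinarith

theorem eventually_mul_ceil_rpow_add_one_pow_le {K δ : ℝ} (hK : 0 ≤ K) (hδ : 0 < δ) :
    ∀ᶠ n : ℕ in atTop, K * ((⌈(n : ℝ) ^ (1 / 3 - δ)⌉₊ : ℝ) + 1) ^ 3 ≤ n := by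
  have hlim : Tendsto (fun n : ℕ => 27 * K * ((n : ℝ) ^ (-(3 * δ)) + (n : ℝ)⁻¹)) atTop (𝓝 0) := by
    have := ((tendsto_rpow_neg_atTop (by positivity : 0 < 3 * δ)).comp
      tendsto_natCast_atTop_atTop).add tendsto_inv_atTop_nhds_zero_nat
    simpa using this.const_mul (27 * K)
  filter_upwards [hlim.eventually (ge_mem_nhds zero_lt_one), eventually_gt_atTop 0] with n hn hn0
  set x := (n : ℝ) ^ (1 / 3 - δ)
  have hpos : (0 : ℝ) < n := by exact_mod_cast hn0
  have hx : 0 ≤ x := by positivity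
  have hceil : (⌈x⌉₊ : ℝ) + 1 ≤ x + 2 := by linarith [Nat.ceil_lt_add_one hx]
  have hx3 : x ^ 3 = n * (n : ℝ) ^ (-(3 * δ)) := by
    rw [← Real.rpow_natCast, ← Real.rpow_mul hpos.le,
      show (1 / 3 - δ) * ((3 : ℕ) : ℝ) = 1 + -(3 * δ) by push_cast; ring,
      Real.rpow_add hpos, Real.rpow_one]
  calc K * ((⌈x⌉₊ : ℝ) + 1) ^ 3 ≤ K * (x + 2) ^ 3 := by gcongr
    _ ≤ K * (27 * (x ^ 3 + 1)) := by
        gcongr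
        nlinarith [mul_nonneg hx (sq_nonneg (x - 1)), sq_nonneg (x - 1 / 2)]
    _ = n * (27 * K * ((n : ℝ) ^ (-(3 * δ)) + (n : ℝ)⁻¹)) := by
        rw [hx3]
        field_simp
    _ ≤ n * 1 := by gcongr
    _ = n := mul_one _

end Hopsets

open Hopsets in
/-- For every `δ > 0` and `C > 0`, for all large enough `n` there is an
`n`-vertex weighted undirected graph `G` such that every exact hopset `H` for `G`
(i.e. `dist^{(β)}_{G∪H} = dist_G`) with `|H| ≤ C·n` has hopbound `β ≥ n^{1/3−δ}`. -/
theorem stmt_16 (δ C : ℝ) (hδ : 0 < δ) (hC : 0 < C) :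
    ∃ n0 : ℕ, ∀ n ≥ n0, ∃ G : WDigraph (Fin n), G.Symmetric ∧ G.Nonneg ∧
      ∀ (β : ℕ) (H : Finset (Fin n × Fin n)),
        (∀ u v, (G.augment H).hopDist β u v = G.dist u v) →
        (H.card : ℝ) ≤ C * (n : ℝ) →
        (n : ℝ) ^ (1 / 3 - δ) ≤ (β : ℝ) := by
  obtain ⟨n₀, hn₀⟩ := eventually_atTop.mp
    ((eventually_mul_ceil_rpow_add_one_pow_le (K := 8 * C + 4) (by positivity) hδ).and
      (eventually_gt_atTop 0))
  refine ⟨n₀, fun n hn => ?_⟩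
  obtain ⟨hbig, hn0⟩ := hn₀ n hn
  have : NeZero n := ⟨hn0.ne'⟩
  set h := ⌈(n : ℝ) ^ (1 / 3 - δ)⌉₊
  have hh : 1 ≤ h := Nat.one_le_iff_ne_zero.mpr (Nat.ceil_pos.mpr (by positivity)).ne'
  -- layers of width `2 h D` hold the `h D²` lines with start `a < h D` and slope `d < D`
  set D := n / (2 * h * (h + 1))
  refine ⟨layerGraph n (2 * h * D) (h * D ^ 2), layerGraph_symmetric, layerGraph_nonneg,
    fun β H hexact hcard => ?_⟩
  suffices h ≤ β from (Nat.le_ceil _).trans (by exact_mod_cast this)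
  by_contra! hβ
  have hfit : (h + 1) * (2 * h * D) ≤ n :=
    calc (h + 1) * (2 * h * D) = D * (2 * h * (h + 1)) := by ring
      _ ≤ n := Nat.div_mul_le_self n _
  have hcount := mul_le_card_of_hopDist_eq (A := h * D) (D := D) hexact hβ hfit
    fun a ha d hd =>
      ⟨by nlinarith, Nat.mul_lt_mul_of_pos_left (Nat.pow_lt_pow_left hd two_ne_zero) hh⟩
  have hsmall : ((h * D * D : ℕ) : ℝ) ≤ C * n := (Nat.cast_le.mpr hcount).trans hcard
  have hlarge := mul_lt_mul_sq_div hC hh hbig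
  push_cast at hsmall
  nlinarith
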